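/- For vertices i and j of a graph G with adjacency matrix spectral decomposition A = Σ_θ θ E_θ, the rational function (Σ_{P:i→j} φ^{G\P})(t)/φ^G(t) equals Σ_θ (E_θ)_{i,j}/(t - θ), where the sum in the numerator is over all paths from i to j. -/

import Mathlib

open Polynomial Matrix Finset

/-- Characteristic polynomial (over ℝ) of the adjacency matrix of the induced subgraph of `G`
obtained by deleting the vertices in `S`. -/
noncomputable def phiDel {V : Type*} [Fintype V] [DecidableEq V]
    (G : SimpleGraph V) [DecidableRel G.Adj] (S : Finset V) : Polynomial ℝ :=
  ((G.adjMatrix ℝ).submatrix (Subtype.val : {v // v ∉ S} → V) Subtype.val).charpoly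

/-- The sum, over all paths `P` from `i` to `j` in `G`, of the characteristic polynomial of
the graph obtained from `G` by deleting all vertices of `P`. -/
noncomputable def pathSum {V : Type*} [Fintype V] [DecidableEq V]
    (G : SimpleGraph V) [DecidableRel G.Adj] (i j : V) : Polynomial ℝ :=
  ∑ P : G.Path i j, phiDel G P.1.support.toFinset

/-! Expanding `adj (t - A)` along row `i` gives, for `j ≠ i`,
`adj (t - A) i j = ∑_{k ~ i} adj (t - A_{G ∖ i}) k j`: this is the decomposition of a path from
`i` to `j` into its first edge `i k` and a path from `k` to `j` in `G ∖ i`. Together with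
`adj (t - A) i i = φ^{G ∖ i}`, induction on the number of vertices identifies `adj (t - A) i j`
with the path sum. Dividing by `det (t - A) = φ^G` gives `(t - A)⁻¹ i j`, and the spectral
decomposition gives `(t - A)⁻¹ = ∑_θ (t - θ)⁻¹ E_θ`. -/

namespace Matrix
variable {n : Type*} [Fintype n] [DecidableEq n]

section CommRing
variable {R : Type*} [CommRing R]

theorem adjugate_apply_self (M : Matrix n n R) (i : n) :
    M.adjugate i i = (M.submatrix (Subtype.val : ({i}ᶜ : Set n) → n) Subtype.val).det := by
  rw [adjugate_apply, twoBlockTriangular_det' _ (· = i)]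
  · -- the block determinants above carry the generic `Subtype.fintype` instance
    let : Fintype {k // k = i} := Subtype.fintype _
    rw [det_eq_elem_of_subsingleton _ ⟨i, rfl⟩]
    simp only [toSquareBlockProp, toBlock, submatrix_apply, updateRow_self, Pi.single_eq_same,
      one_mul]
    exact congrArg det (by ext k l; simp [updateRow_ne k.2]; rfl)
  · rintro k rfl l hl
    simp [hl]

theorem adjugate_apply_of_ne (M : Matrix n n R) {i j : n} (hji : j ≠ i)
    (hN : IsLeftRegular (M.submatrix (Subtype.val : ({i}ᶜ : Set n) → n) Subtype.val).det) :
    M.adjugate i j = -∑ l : ({i}ᶜ : Set n), M i l *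
      (M.submatrix (Subtype.val : ({i}ᶜ : Set n) → n) Subtype.val).adjugate l
        ⟨j, Set.mem_compl_singleton_iff.2 hji⟩ := by
  set N := M.submatrix (Subtype.val : ({i}ᶜ : Set n) → n) Subtype.val
  set r : ({i}ᶜ : Set n) → R := fun k => M.adjugate i k
  set b : ({i}ᶜ : Set n) → R := fun l => M i l
  -- row `i` of `adj M * M = det M • 1` off column `i`, using `adj M i i = det N`
  have hrN : r ᵥ* N = -(N.det • b) := by
    funext l
    have h := congrFun (congrFun (adjugate_mul M) i) l
    rw [mul_apply, Fintype.sum_eq_add_sum_subtype_ne _ i, adjugate_apply_self,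
      smul_apply, one_apply_ne' l.2, smul_zero] at h
    simp only [vecMul, dotProduct, Pi.neg_apply, Pi.smul_apply, smul_eq_mul]
    exact eq_neg_of_add_eq_zero_right h
  have hcancel : N.det • r = N.det • -(b ᵥ* N.adjugate) := by
    calc N.det • r = r ᵥ* (N * N.adjugate) := by rw [mul_adjugate, vecMul_smul, vecMul_one]
      _ = (r ᵥ* N) ᵥ* N.adjugate := (vecMul_vecMul _ _ _).symm
      _ = N.det • -(b ᵥ* N.adjugate) := by rw [hrN, neg_vecMul, smul_vecMul, smul_neg]
  have := congrFun hcancel ⟨j, Set.mem_compl_singleton_iff.2 hji⟩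
  simp only [Pi.smul_apply, smul_eq_mul] at this
  simpa [r, b, vecMul, dotProduct] using hN this

theorem charmatrix_submatrix {m : Type*} [Fintype m] [DecidableEq m] (M : Matrix n n R)
    {f : m → n} (hf : Function.Injective f) :
    (charmatrix M).submatrix f f = charmatrix (M.submatrix f f) := by
  ext a b
  obtain rfl | h := eq_or_ne a b
  · simp [charmatrix_apply_eq]
  · simp [charmatrix_apply_ne _ _ _ h, charmatrix_apply_ne _ _ _ (hf.ne h)]

theorem map_eval_charmatrix (M : Matrix n n R) (t : R) :
    (charmatrix M).map (eval t) = scalar n t - M := by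
  ext a b
  obtain rfl | h := eq_or_ne a b
  · simp [charmatrix_apply_eq]
  · simp [h]

theorem eval_adjugate_charmatrix (M : Matrix n n R) (t : R) (i j : n) :
    ((charmatrix M).adjugate i j).eval t = (scalar n t - M).adjugate i j := by
  rw [← map_eval_charmatrix, ← coe_evalRingHom]
  exact congrFun (congrFun (RingHom.map_adjugate (evalRingHom t) (charmatrix M)) i) j

end CommRing

section Field
variable {K : Type*} [Field K]

theorem inv_apply_eq_adjugate_div_det (M : Matrix n n K) (i j : n) :
    M⁻¹ i j = M.adjugate i j / M.det := by
  rw [inv_def, smul_apply, Ring.inverse_eq_inv', smul_eq_mul, div_eq_inv_mul]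

theorem inv_scalar_sub_eq_sum_smul (A : Matrix n n K) (Φ : Finset K) (E : K → Matrix n n K)
    (hdecomp : A = ∑ θ ∈ Φ, θ • E θ)
    (hidem : ∀ θ ∈ Φ, E θ * E θ = E θ)
    (horth : ∀ θ ∈ Φ, ∀ θ' ∈ Φ, θ ≠ θ' → E θ * E θ' = 0)
    (hsum : ∑ θ ∈ Φ, E θ = 1) {t : K} (ht : (scalar n t - A).det ≠ 0) :
    (scalar n t - A)⁻¹ = ∑ θ ∈ Φ, (t - θ)⁻¹ • E θ := by
  have hAE : ∀ θ ∈ Φ, A * E θ = θ • E θ := by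
    intro θ hθ
    rw [hdecomp, sum_mul, sum_eq_single_of_mem θ hθ, smul_mul, hidem θ hθ]
    intro θ' hθ' hne
    rw [smul_mul, horth θ' hθ' θ hθ hne, smul_zero]
  have hRE : ∀ θ ∈ Φ, (scalar n t - A) * E θ = (t - θ) • E θ := by
    intro θ hθ
    rw [sub_mul, hAE θ hθ, scalar_apply, ← smul_one_eq_diagonal, smul_mul, one_mul, sub_smul]
  refine inv_eq_right_inv ?_
  rw [mul_sum, ← hsum]
  refine sum_congr rfl fun θ hθ => ?_
  rw [Matrix.mul_smul, hRE θ hθ, smul_smul]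
  obtain rfl | hne := eq_or_ne t θ
  · have hunit := (isUnit_iff_isUnit_det _).2 (isUnit_iff_ne_zero.2 ht)
    have hE : E t = 0 := hunit.mul_right_eq_zero.1 (by rw [hRE t hθ, sub_self, zero_smul])
    simp [hE]
  · rw [inv_mul_cancel₀ (sub_ne_zero.2 hne), one_smul]

end Field

end Matrix

namespace SimpleGraph
variable {V : Type*} {G : SimpleGraph V}

theorem adjMatrix_induce {α : Type*} [Zero α] [One α] [DecidableRel G.Adj] (s : Set V)
    [DecidablePred (· ∈ s)] :
    (G.induce s).adjMatrix α = (G.adjMatrix α).submatrix Subtype.val Subtype.val :=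
  ((Embedding.induce s).submatrix_adjMatrix α).symm

namespace Walk
variable {s : Set V} {u v : s}

def ofInduce (p : (G.induce s).Walk u v) : G.Walk u v :=
  p.map (Embedding.induce s).toHom

theorem support_ofInduce (p : (G.induce s).Walk u v) :
    p.ofInduce.support = p.support.map Subtype.val :=
  support_map _ _

theorem isPath_ofInduce_iff (p : (G.induce s).Walk u v) : p.ofInduce.IsPath ↔ p.IsPath :=
  isPath_map_iff_of_injective (Embedding.induce (G := G) s).injective

theorem ofInduce_injective :
    Function.Injective (ofInduce : (G.induce s).Walk u v → G.Walk u v) :=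
  map_injective_of_injective (Embedding.induce (G := G) s).injective _ _

theorem ofInduce_induce {a b : V} (p : G.Walk a b) (hp : ∀ x ∈ p.support, x ∈ s) :
    (p.induce s hp).ofInduce = p :=
  map_induce p hp

end Walk

theorem sum_path_eq_sum_adj_sum_path_induce [Fintype V] [DecidableEq V] [DecidableRel G.Adj]
    {M : Type*} [AddCommMonoid M] (f : Finset V → M) {i j : V} (hji : j ≠ i) :
    ∑ P : G.Path i j, f P.1.support.toFinset =
      ∑ k ∈ univ.filter (fun k : ({i}ᶜ : Set V) => G.Adj i k),
        ∑ P : (G.induce {i}ᶜ).Path k ⟨j, Set.mem_compl_singleton_iff.2 hji⟩,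
          f (insert i (P.1.support.toFinset.map (Function.Embedding.subtype _))) := by
  rw [Finset.sum_sigma']
  symm
  refine Finset.sum_bij
    (fun x hx => ⟨.cons (mem_filter.1 (mem_sigma.1 hx).1).2 x.2.1.ofInduce, ?_⟩)
    (fun _ _ => mem_univ _) ?_ ?_ ?_
  · rw [Walk.cons_isPath_iff, Walk.isPath_ofInduce_iff, Walk.support_ofInduce]
    exact ⟨x.2.2, by simp⟩
  · rintro ⟨k₁, P₁⟩ _ ⟨k₂, P₂⟩ _ h
    have hw := congrArg Subtype.val h
    simp only [Walk.cons.injEq] at hw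
    obtain rfl : k₁ = k₂ := Subtype.ext hw.1
    rw [Subtype.ext (Walk.ofInduce_injective (eq_of_heq hw.2))]
  · rintro ⟨P, hP⟩ -
    cases P with
    | nil => exact absurd rfl hji
    | @cons _ c _ h q =>
      rw [Walk.cons_isPath_iff] at hP
      have hq : ∀ v ∈ q.support, v ∈ ({i}ᶜ : Set V) := fun v hv hvi => hP.2 (hvi ▸ hv)
      refine ⟨⟨⟨c, hq _ q.start_mem_support⟩, ⟨q.induce _ hq, ?_⟩⟩,
        by simpa using h, ?_⟩
      · rw [← Walk.isPath_ofInduce_iff, Walk.ofInduce_induce]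
        exact hP.1
      · simp [Walk.ofInduce_induce]
  · rintro x -
    rw [Walk.support_cons, List.toFinset_cons, Walk.support_ofInduce]
    congr 2
    ext v
    simp

end SimpleGraph

section PathSum
open SimpleGraph
variable {V : Type*} [Fintype V] [DecidableEq V] (G : SimpleGraph V) [DecidableRel G.Adj]

theorem phiDel_eq_charpoly_submatrix {ι : Type*} [Fintype ι] [DecidableEq ι] (S : Finset V)
    {f : ι → V} (hf : Function.Injective f) (hrange : ∀ v, v ∈ Set.range f ↔ v ∉ S) :
    phiDel G S = ((G.adjMatrix ℝ).submatrix f f).charpoly := by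
  let e : ι ≃ {v // v ∉ S} := (Equiv.ofInjective f hf).trans (Equiv.subtypeEquivRight hrange)
  rw [phiDel, ← charpoly_reindex e.symm]
  rfl

theorem phiDel_empty : phiDel G ∅ = (G.adjMatrix ℝ).charpoly :=
  phiDel_eq_charpoly_submatrix G ∅ (f := id) Function.injective_id (by simp)

theorem phiDel_singleton (i : V) : phiDel G {i} = ((G.induce {i}ᶜ).adjMatrix ℝ).charpoly := by
  rw [adjMatrix_induce]
  exact phiDel_eq_charpoly_submatrix G {i} Subtype.val_injective (by simp)

theorem phiDel_induce_compl_singleton (i : V) (S : Finset ({i}ᶜ : Set V)) :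
    phiDel (G.induce {i}ᶜ) S =
      phiDel G (insert i (S.map (Function.Embedding.subtype _))) := by
  rw [phiDel, adjMatrix_induce, submatrix_submatrix]
  refine (phiDel_eq_charpoly_submatrix G _ (Subtype.val_injective.comp Subtype.val_injective)
    fun v => ?_).symm
  aesop

theorem pathSum_self (i : V) : pathSum G i i = phiDel G {i} := by
  rw [pathSum, Fintype.sum_eq_single Path.nil fun P hP => absurd P.loop_eq hP]
  rfl

theorem pathSum_eq_sum_adjMatrix_mul (i j : V) (hji : j ≠ i) :
    pathSum G i j = ∑ k : ({i}ᶜ : Set V), C (G.adjMatrix ℝ i k) *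
      pathSum (G.induce {i}ᶜ) k ⟨j, Set.mem_compl_singleton_iff.2 hji⟩ := by
  rw [pathSum, sum_path_eq_sum_adj_sum_path_induce _ hji, sum_filter]
  refine sum_congr rfl fun k _ => ?_
  rw [adjMatrix_apply]
  split_ifs <;> simp [pathSum, mul_sum, phiDel_induce_compl_singleton]

end PathSum

theorem adjugate_charmatrix_adjMatrix {V : Type*} [Fintype V] [DecidableEq V]
    (G : SimpleGraph V) [DecidableRel G.Adj] (i j : V) :
    (charmatrix (G.adjMatrix ℝ)).adjugate i j = pathSum G i j := by
  induction hn : Fintype.card V using Nat.strong_induction_on generalizing V with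
  | _ n ih =>
  have hsub : (charmatrix (G.adjMatrix ℝ)).submatrix (Subtype.val : ({i}ᶜ : Set V) → V)
      Subtype.val = charmatrix ((G.induce {i}ᶜ).adjMatrix ℝ) := by
    rw [SimpleGraph.adjMatrix_induce, charmatrix_submatrix _ Subtype.val_injective]
  obtain rfl | hji := eq_or_ne j i
  · rw [adjugate_apply_self, hsub, pathSum_self, phiDel_singleton]
    rfl
  · have hreg := (charpoly_monic ((G.induce {i}ᶜ).adjMatrix ℝ)).isRegular.left
    rw [Matrix.charpoly, ← hsub] at hreg
    rw [adjugate_apply_of_ne _ hji hreg, pathSum_eq_sum_adjMatrix_mul G i j hji,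
      ← sum_neg_distrib]
    refine sum_congr rfl fun k _ => ?_
    have hcard : Fintype.card ({i}ᶜ : Set V) < n := hn ▸ Fintype.card_subtype_lt (· rfl)
    rw [hsub, ih _ hcard _ _ _ rfl, charmatrix_apply_ne _ _ _ (Ne.symm k.2), neg_mul, neg_neg]

theorem offdiagonal_entry_partial_fractions_general {V : Type*} [Fintype V] [DecidableEq V]
    (G : SimpleGraph V) [DecidableRel G.Adj] (i j : V)
    -- spectral decomposition of the adjacency matrix into distinct eigenvalues `Φ`
    -- with orthogonal eigenprojectors `E θ`
    (Φ : Finset ℝ) (E : ℝ → Matrix V V ℝ)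
    (hdecomp : G.adjMatrix ℝ = ∑ θ ∈ Φ, θ • E θ)
    (hidem : ∀ θ ∈ Φ, E θ * E θ = E θ)
    (horth : ∀ θ ∈ Φ, ∀ θ' ∈ Φ, θ ≠ θ' → E θ * E θ' = 0)
    (hsum : ∑ θ ∈ Φ, E θ = 1) :
    ∀ t : ℝ, (phiDel G ∅).eval t ≠ 0 →
      (pathSum G i j).eval t / (phiDel G ∅).eval t = ∑ θ ∈ Φ, (E θ) i j / (t - θ) := by
  intro t ht
  rw [phiDel_empty, eval_charpoly] at ht ⊢
  rw [← adjugate_charmatrix_adjMatrix, eval_adjugate_charmatrix,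
    ← inv_apply_eq_adjugate_div_det,
    inv_scalar_sub_eq_sum_smul _ Φ E hdecomp hidem horth hsum ht]
  simp [Matrix.sum_apply, div_eq_inv_mul]

theorem offdiagonal_entry_partial_fractions {V : Type*} [Fintype V] [DecidableEq V]
    (G : SimpleGraph V) [DecidableRel G.Adj] (i j : V)
    -- spectral decomposition of the adjacency matrix into distinct eigenvalues `Φ`
    -- with orthogonal eigenprojectors `E θ`
    (Φ : Finset ℝ) (E : ℝ → Matrix V V ℝ)
    (hdecomp : G.adjMatrix ℝ = ∑ θ ∈ Φ, θ • E θ)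
    (hsym : ∀ θ ∈ Φ, (E θ).IsSymm)
    (hidem : ∀ θ ∈ Φ, E θ * E θ = E θ)
    (horth : ∀ θ ∈ Φ, ∀ θ' ∈ Φ, θ ≠ θ' → E θ * E θ' = 0)
    (hsum : ∑ θ ∈ Φ, E θ = 1) :
    ∀ t : ℝ, (phiDel G ∅).eval t ≠ 0 →
      (pathSum G i j).eval t / (phiDel G ∅).eval t = ∑ θ ∈ Φ, (E θ) i j / (t - θ) :=
  offdiagonal_entry_partial_fractions_general G i j Φ E hdecomp hidem horth hsum
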